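/- If a graph G admits a packing (1,1,2,2)-coloring, then its subdivision D(G) has packing chromatic number at most 5, i.e., D(G) admits a packing (1,2,3,4,5)-coloring. -/
import Mathlib


/-- A packing `s`-coloring of `G`: vertices with color `i` are pairwise at distance
at least `s i + 1`. -/
def IsPackingColoring {V : Type*} (G : SimpleGraph V) {k : ℕ} (s : Fin k → ℕ)
    (f : V → Fin k) : Prop :=
  ∀ (i : Fin k) (x y : V), f x = i → f y = i → x ≠ y → (s i : ℕ∞) + 1 ≤ G.edist x y

/-- The subdivision `D(G)` of `G`: each edge `e = uv` is replaced by a path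
`u - w_e - v` through a new vertex `w_e`. -/
def Subdiv {V : Type*} (G : SimpleGraph V) : SimpleGraph (V ⊕ G.edgeSet) :=
  SimpleGraph.fromRel fun a b =>
    ∃ (v : V) (e : G.edgeSet), a = Sum.inl v ∧ b = Sum.inr e ∧ v ∈ (e : Sym2 V)

lemma subdiv_adj_inl {V : Type*} {G : SimpleGraph V} {u : V} {b : V ⊕ G.edgeSet}
    (h : (Subdiv G).Adj (Sum.inl u) b) :
    ∃ e : G.edgeSet, b = Sum.inr e ∧ u ∈ (e : Sym2 V) := by
  rcases h with ⟨hne, h | h⟩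
  · obtain ⟨v, e, hv, hb, hm⟩ := h
    exact ⟨e, hb, by cases hv; exact hm⟩
  · obtain ⟨v, e, hv, hb, hm⟩ := h
    exact absurd hb (by simp)

lemma subdiv_adj_inr {V : Type*} {G : SimpleGraph V} {e : G.edgeSet} {b : V ⊕ G.edgeSet}
    (h : (Subdiv G).Adj (Sum.inr e) b) :
    ∃ w : V, b = Sum.inl w ∧ w ∈ (e : Sym2 V) := by
  rcases h with ⟨hne, h | h⟩
  · obtain ⟨v, e', hv, hb, hm⟩ := h
    exact absurd hv (by simp)
  · obtain ⟨v, e', hv, hb, hm⟩ := h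
    cases hv; cases hb; exact ⟨v, rfl, hm⟩

lemma proj_walk {V : Type*} {G : SimpleGraph V} :
    ∀ n (u v : V) (p : (Subdiv G).Walk (Sum.inl u) (Sum.inl v)), p.length = n →
      ∃ q : G.Walk u v, 2 * q.length ≤ p.length := by
  intro n
  induction n using Nat.strong_induction_on with
  | _ n ih =>
    intro u v p hp
    cases p with
    | nil => exact ⟨SimpleGraph.Walk.nil, by simp⟩
    | @cons _ b _ h q =>
      obtain ⟨e, rfl, hue⟩ := subdiv_adj_inl h
      cases q with
      | @cons _ c _ h' q' =>
        obtain ⟨w, rfl, hwe⟩ := subdiv_adj_inr h'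
        have hlen : q'.length < n := by
          subst hp; simp
        obtain ⟨q'', hq''⟩ := ih q'.length hlen w v q' rfl
        rcases eq_or_ne u w with rfl | hne
        · exact ⟨q'', by subst hp; simp; omega⟩
        · have hadj : G.Adj u w := by
            have : (e : Sym2 V) = s(u, w) := ((Sym2.mem_and_mem_iff hne).mp ⟨hue, hwe⟩)
            exact (SimpleGraph.mem_edgeSet G).mp (this ▸ e.2)
          exact ⟨SimpleGraph.Walk.cons hadj q'', by subst hp; simp; omega⟩

lemma edist_subdiv {V : Type*} (G : SimpleGraph V) (u v : V) :
    2 * G.edist u v ≤ (Subdiv G).edist (Sum.inl u) (Sum.inl v) := by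
  rcases eq_or_ne ((Subdiv G).edist (Sum.inl u) (Sum.inl v)) ⊤ with ht | ht
  · simp [ht]
  · obtain ⟨p, hp⟩ := SimpleGraph.exists_walk_of_edist_ne_top ht
    obtain ⟨q, hq⟩ := proj_walk p.length u v p rfl
    calc 2 * G.edist u v ≤ 2 * (q.length : ℕ∞) := by
          exact mul_le_mul_right (SimpleGraph.edist_le q) 2
      _ ≤ (p.length : ℕ∞) := by
          rw [← Nat.cast_ofNat, ← Nat.cast_mul]; exact_mod_cast hq
      _ = _ := hp

/-- If `G` admits a packing `(1,1,2,2)`-coloring, then `D(G)` admits a packing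
`(1,2,3,4,5)`-coloring, i.e. its packing chromatic number is at most `5`. -/
theorem stmt1 {V : Type*} (G : SimpleGraph V)
    (h : ∃ f : V → Fin 4, IsPackingColoring G ![1, 1, 2, 2] f) :
    ∃ g : (V ⊕ G.edgeSet) → Fin 5,
      IsPackingColoring (Subdiv G) ![1, 2, 3, 4, 5] g := by
  obtain ⟨f, hf⟩ := h
  refine ⟨fun x => Sum.elim (fun v => (f v).succ) (fun _ => 0) x, ?_⟩
  intro i x y hx hy hxy
  cases x with
  | inr e =>
    cases y with
    | inl v => simp at hx; subst hx; simp at hy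
    | inr e' =>
      simp at hx; subst hx
      -- need 2 ≤ edist; not adjacent, not equal
      have hne : (Sum.inr e : V ⊕ G.edgeSet) ≠ Sum.inr e' := hxy
      have hnadj : ¬ (Subdiv G).Adj (Sum.inr e) (Sum.inr e') := by
        intro hadj
        rcases hadj with ⟨_, h | h⟩
        · obtain ⟨_, _, hv, _, _⟩ := h; simp at hv
        · obtain ⟨_, _, hv, _, _⟩ := h; simp at hv
      have h0 : (Subdiv G).edist (Sum.inr e) (Sum.inr e') ≠ 0 := by
        simpa using hne
      have h1 : (Subdiv G).edist (Sum.inr e) (Sum.inr e') ≠ 1 := by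
        intro h1'; exact hnadj (SimpleGraph.edist_eq_one_iff_adj.mp h1')
      have : 1 < (Subdiv G).edist (Sum.inr e) (Sum.inr e') :=
        lt_of_le_of_ne (ENat.one_le_iff_ne_zero.mpr h0) (Ne.symm h1)
      simpa using Order.add_one_le_of_lt this
  | inl u =>
    cases y with
    | inr e => simp at hy; subst hy; simp at hx
    | inl v =>
      have huv : u ≠ v := fun h => hxy (by rw [h])
      simp at hx hy
      have key := edist_subdiv G u v
      have hfuv : f v = f u := by
        have := hx.trans hy.symm
        exact (Fin.succ_injective _ this).symm
      have hG := hf (f u) u v rfl hfuv huv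
      subst hx
      have hle : ∀ c : Fin 4, ((![1,2,3,4,5] c.succ : ℕ) : ℕ∞) + 1 ≤ 2 * (((![1,1,2,2] c : ℕ) : ℕ∞) + 1) := by
        intro c; fin_cases c <;> simp <;> decide
      refine (hle (f u)).trans ?_
      calc (2 : ℕ∞) * (((![1,1,2,2] (f u) : ℕ) : ℕ∞) + 1) ≤ 2 * G.edist u v :=
            mul_le_mul_right hG 2
        _ ≤ _ := key
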